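/- Regularized loss bound at the weight-sharing solution (penultimate line of the proof of Theorem 1): Under hypotheses (H1), (H2) and (H3), for every index j ∈ {1,…,T}, L_j(ψ₀•+ψⱼ•) + λ̃‖ψ₀• + ψⱼ•‖² ≤ L_j(ψⱼ*) + λ₀‖ψ₀*‖² + ∑_{t=1}^{T} |L_t(ψ₀*) − L_t(ψₜ*)|, where the key ingredients are the weighted Cauchy–Schwarz inequality λ̃‖ψ₀•+ψⱼ•‖² ≤ λ₀‖ψ₀•‖² + λ‖ψⱼ•‖² and the single-task bound derived from (H1). -/

import Mathlib

/-!
The weighted Cauchy–Schwarz inequality `λ̃‖x + y‖² ≤ λ₀‖x‖² + λ‖y‖²` bounds the left-hand side by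
the `j`-th term of the weight-sharing objective plus `λ₀‖ψ₀•‖²`. By (H3) every other term of that
objective dominates the stand-alone loss, so (H1) bounds the `j`-th term by the stand-alone loss of
task `j` plus the gap between the universal and the stand-alone losses, summed over all tasks.
-/

open Finset

theorem mul_div_add_mul_add_sq_le {a b : ℝ} (ha : 0 ≤ a) (hb : 0 ≤ b) (u v : ℝ) :
    a * b / (a + b) * (u + v) ^ 2 ≤ a * u ^ 2 + b * v ^ 2 := by
  rcases (add_nonneg ha hb).eq_or_lt with hab | hab
  · rw [← hab, div_zero, zero_mul]
    positivity
  · rw [div_mul_eq_mul_div, div_le_iff₀ hab]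
    nlinarith [sq_nonneg (a * u - b * v)]

theorem mul_div_add_mul_norm_add_sq_le {E : Type*} [SeminormedAddCommGroup E]
    {a b : ℝ} (ha : 0 ≤ a) (hb : 0 ≤ b) (x y : E) :
    a * b / (a + b) * ‖x + y‖ ^ 2 ≤ a * ‖x‖ ^ 2 + b * ‖y‖ ^ 2 :=
  calc a * b / (a + b) * ‖x + y‖ ^ 2 ≤ a * b / (a + b) * (‖x‖ + ‖y‖) ^ 2 := by
        gcongr
        exact norm_add_le x y
    _ ≤ a * ‖x‖ ^ 2 + b * ‖y‖ ^ 2 := mul_div_add_mul_add_sq_le ha hb _ _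

theorem regularized_loss_bound_general
    {V : Type*} [NormedAddCommGroup V]
    (T : ℕ)
    (L : ℕ → V → ℝ)
    (l0 l : ℝ) (hl0 : 0 < l0) (hl : 0 < l)
    (ψ₀dot : V) (ψdot : ℕ → V) (ψ₀star : V) (ψstar : ℕ → V)
    (H1 : ∑ t ∈ Finset.Icc 1 T, (L t (ψ₀dot + ψdot t) + l * ‖ψdot t‖ ^ 2)
            + l0 * ‖ψ₀dot‖ ^ 2
          ≤ ∑ t ∈ Finset.Icc 1 T, L t ψ₀star + l0 * ‖ψ₀star‖ ^ 2)
    (H3 : ∀ t ∈ Finset.Icc 1 T, L t (ψstar t) ≤ L t (ψ₀dot + ψdot t))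
    (j : ℕ) (hj : j ∈ Finset.Icc 1 T) :
    L j (ψ₀dot + ψdot j) + (l0 * l / (l0 + l)) * ‖ψ₀dot + ψdot j‖ ^ 2
      ≤ L j (ψstar j) + l0 * ‖ψ₀star‖ ^ 2
          + ∑ t ∈ Finset.Icc 1 T, |L t ψ₀star - L t (ψstar t)| := by
  set F : ℕ → ℝ := fun t ↦ L t (ψ₀dot + ψdot t) + l * ‖ψdot t‖ ^ 2
  have weighted_cs := mul_div_add_mul_norm_add_sq_le hl0.le hl.le ψ₀dot (ψdot j)
  have single_task : F j - L j (ψstar j) ≤ ∑ t ∈ Icc 1 T, (F t - L t (ψstar t)) :=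
    single_le_sum (f := fun t ↦ F t - L t (ψstar t)) (fun t ht ↦ by
      have := H3 t ht
      have := mul_nonneg hl.le (sq_nonneg ‖ψdot t‖)
      simp only [F]
      linarith) hj
  have universal_gap : ∑ t ∈ Icc 1 T, (L t ψ₀star - L t (ψstar t))
      ≤ ∑ t ∈ Icc 1 T, |L t ψ₀star - L t (ψstar t)| :=
    sum_le_sum fun t _ ↦ le_abs_self _
  simp only [sum_sub_distrib] at single_task universal_gap
  linarith

/-- Regularized loss bound at the weight-sharing solution (penultimate line of the proof). -/
theorem regularized_loss_bound
    {V : Type*} [NormedAddCommGroup V] [InnerProductSpace ℝ V]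
    (T : ℕ) (hT : 1 ≤ T)
    (L : ℕ → V → ℝ) (hL : ∀ t ∈ Finset.Icc 1 T, ∀ ψ : V, 0 ≤ L t ψ)
    (l0 l : ℝ) (hl0 : 0 < l0) (hl : 0 < l)
    (ψ₀dot : V) (ψdot : ℕ → V) (ψ₀star : V) (ψstar : ℕ → V)
    (H1 : ∑ t ∈ Finset.Icc 1 T, (L t (ψ₀dot + ψdot t) + l * ‖ψdot t‖ ^ 2)
            + l0 * ‖ψ₀dot‖ ^ 2
          ≤ ∑ t ∈ Finset.Icc 1 T, L t ψ₀star + l0 * ‖ψ₀star‖ ^ 2)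
    (H2 : ∀ t ∈ Finset.Icc 1 T, ∀ ψ : V,
            L t (ψstar t) + (l0 * l / (l0 + l)) * ‖ψstar t‖ ^ 2
          ≤ L t ψ + (l0 * l / (l0 + l)) * ‖ψ‖ ^ 2)
    (H3 : ∀ t ∈ Finset.Icc 1 T, L t (ψstar t) ≤ L t (ψ₀dot + ψdot t))
    (j : ℕ) (hj : j ∈ Finset.Icc 1 T) :
    L j (ψ₀dot + ψdot j) + (l0 * l / (l0 + l)) * ‖ψ₀dot + ψdot j‖ ^ 2
      ≤ L j (ψstar j) + l0 * ‖ψ₀star‖ ^ 2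
          + ∑ t ∈ Finset.Icc 1 T, |L t ψ₀star - L t (ψstar t)| :=
  regularized_loss_bound_general T L l0 l hl0 hl ψ₀dot ψdot ψ₀star ψstar H1 H3 j hj
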